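/- arXiv:1405.6677 — 7 statements merged into one kernel-verified Lean document; each statement's English description precedes it below -/
import Mathlib

section
/- Let γ be strictly convex and differentiable on an open interval, and μ a probability measure supported in the interior of dom_γ with γ' integrable with respect to μ. Then the point b = (γ')^{-1}( ∫ γ'(x) μ(dx) ) is the unique minimizer over m ∈ dom_γ of the map m ↦ ∫ d_γ(m, x) μ(dx). -/
open MeasureTheory

lemma bregman_aux_strict (s : Set ℝ) (γ γ' : ℝ → ℝ) (hγ : StrictConvexOn ℝ s γ)
    (hderiv : ∀ x ∈ s, HasDerivAt γ (γ' x) x)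
    {b m : ℝ} (hb : b ∈ s) (hm : m ∈ s) (hne : m ≠ b) :
    γ b + γ' b * (m - b) < γ m := by
  rcases lt_or_gt_of_ne hne with h | h
  · have h2 := hγ.slope_lt_of_hasDerivAt hm hb h (hderiv b hb)
    rw [slope_def_field, div_lt_iff₀ (by linarith : (0:ℝ) < b - m)] at h2
    nlinarith
  · have h2 := hγ.lt_slope_of_hasDerivAt hb hm h (hderiv b hb)
    rw [slope_def_field, lt_div_iff₀ (by linarith : (0:ℝ) < m - b)] at h2
    nlinarith

/-- The Bregman mean `b = (γ')⁻¹(∫ γ' dμ)` is the unique minimizer over the domain of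
`m ↦ ∫ d_γ(m, x) μ(dx)`, where `d_γ(x,x') = γ x - γ x' - γ' x' * (x - x')`. -/
theorem bregman_mean_unique_minimizer
    (s : Set ℝ) (hs : IsOpen s) (hconv : Convex ℝ s) (hne : s.Nonempty)
    (γ γ' : ℝ → ℝ) (hγ : StrictConvexOn ℝ s γ)
    (hderiv : ∀ x ∈ s, HasDerivAt γ (γ' x) x)
    (μ : Measure ℝ) [IsProbabilityMeasure μ] (hsupp : μ sᶜ = 0)
    (hint : Integrable γ' μ) (hintγ : Integrable γ μ)
    (hintx : Integrable (fun x => γ' x * x) μ)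
    (b : ℝ) (hb : b ∈ s) (hbdef : γ' b = ∫ x, γ' x ∂μ) :
    (∀ m ∈ s, (∫ x, (γ b - γ x - γ' x * (b - x)) ∂μ) ≤
        ∫ x, (γ m - γ x - γ' x * (m - x)) ∂μ) ∧
      (∀ m ∈ s, (∫ x, (γ m - γ x - γ' x * (m - x)) ∂μ) =
          (∫ x, (γ b - γ x - γ' x * (b - x)) ∂μ) → m = b) := by
  have key : ∀ m : ℝ, (∫ x, (γ m - γ x - γ' x * (m - x)) ∂μ)
      = γ m - (∫ x, γ x ∂μ) - m * (∫ x, γ' x ∂μ) + ∫ x, γ' x * x ∂μ := by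
    intro m
    have h1 : ∀ x : ℝ, γ m - γ x - γ' x * (m - x) = (γ m - γ x - γ' x * m) + γ' x * x := by
      intro x; ring
    simp_rw [h1]
    have I2 : Integrable (fun x => γ m - γ x) μ := (integrable_const (γ m)).sub hintγ
    have I1 : Integrable (fun x => γ m - γ x - γ' x * m) μ := I2.sub (hint.mul_const m)
    rw [integral_add I1 hintx, integral_sub I2 (hint.mul_const m),
      integral_sub (integrable_const (γ m)) hintγ, integral_const, integral_mul_const]
    simp [mul_comm]
  have hdiff : ∀ m : ℝ, (∫ x, (γ m - γ x - γ' x * (m - x)) ∂μ)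
      - (∫ x, (γ b - γ x - γ' x * (b - x)) ∂μ) = γ m - γ b - γ' b * (m - b) := by
    intro m
    rw [key m, key b, hbdef]
    ring
  constructor
  · intro m hm
    rcases eq_or_ne m b with rfl | hmb
    · exact le_refl _
    · have h1 := bregman_aux_strict s γ γ' hγ hderiv hb hm hmb
      have h2 := hdiff m
      linarith
  · intro m hm heq
    by_contra hmb
    have h1 := bregman_aux_strict s γ γ' hγ hderiv hb hm hmb
    have h2 := hdiff m
    rw [heq] at h2
    linarith
end

section
/- Let X be a real-valued random variable with continuous distribution function and let γ be strictly convex and differentiable with γ' strictly increasing. Then the Bregman superquantile satisfies Q_α^{dγ}(X) = (γ')^{-1}( Q_α( γ'(X) ) ), where Q_α denotes the classical superquantile; in particular γ'(F_X^{-1}(α)) = F_{γ'(X)}^{-1}(α). -/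
/-!
A strictly increasing `φ` gives `{φ ∘ X ≤ φ x} = {X ≤ x}`, so the distribution function of `φ ∘ X`
at `φ x` is that of `X` at `x`. By right-continuity of distribution functions the lower quantile `q`
of `X` is attained, hence the distribution function of `φ ∘ X` reaches `α` at `φ q`. Below `φ q` it
stays under `α`: at points `φ x` with `x < q` by minimality of `q`, and below the range of `φ`,
an interval by continuity, it vanishes. So `φ q` is the lower quantile of `φ ∘ X`, and the tail
events `{q ≤ X}` and `{φ q ≤ φ ∘ X}` defining the two superquantiles coincide.
-/

open MeasureTheory

/-- Lower quantile of a real random variable. -/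
noncomputable def lowerQuantile {Ω : Type*} [MeasurableSpace Ω] (μ : Measure Ω)
    (X : Ω → ℝ) (α : ℝ) : ℝ :=
  sInf {x : ℝ | α ≤ (μ {ω | X ω ≤ x}).toReal}

open ProbabilityTheory Filter Topology

theorem StieltjesFunction.csInf_mem_setOf_le (f : StieltjesFunction ℝ) {α : ℝ}
    (hne : {x | α ≤ f x}.Nonempty) :
    sInf {x | α ≤ f x} ∈ {x | α ≤ f x} := by
  set q := sInf {x | α ≤ f x}
  have h_right : ∀ x > q, α ≤ f x := fun x hx => by
    obtain ⟨s, hs, hsx⟩ := exists_lt_of_csInf_lt hne hx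
    exact hs.trans (f.mono hsx.le)
  exact ge_of_tendsto ((f.right_continuous q).mono Set.Ioi_subset_Ici_self)
    (eventually_nhdsWithin_of_forall h_right)

theorem isLeast_setOf_le_cdf (ν : Measure ℝ) [IsProbabilityMeasure ν] {α : ℝ}
    (hα : α ∈ Set.Ioo (0 : ℝ) 1) :
    IsLeast {x | α ≤ cdf ν x} (sInf {x | α ≤ cdf ν x}) := by
  have hne : {x | α ≤ cdf ν x}.Nonempty :=
    ((tendsto_cdf_atTop ν).eventually (eventually_ge_nhds hα.2)).exists
  obtain ⟨x₀, hx₀⟩ :=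
    eventually_atBot.1 ((tendsto_cdf_atBot ν).eventually (eventually_lt_nhds hα.1))
  have hbdd : BddBelow {x | α ≤ cdf ν x} :=
    ⟨x₀, fun x hx => le_of_not_gt fun hlt => (hx₀ x hlt.le).not_ge hx⟩
  exact ⟨(cdf ν).csInf_mem_setOf_le hne, fun x hx => csInf_le hbdd hx⟩

section LowerQuantile

variable {Ω : Type*} [MeasurableSpace Ω] {μ : Measure Ω} [IsProbabilityMeasure μ] {X : Ω → ℝ}
  {α : ℝ}

theorem cdf_map_eq_toReal_measure_le (hX : Measurable X) (x : ℝ) :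
    cdf (μ.map X) x = (μ {ω | X ω ≤ x}).toReal := by
  have := Measure.isProbabilityMeasure_map (μ := μ) hX.aemeasurable
  rw [cdf_eq_real, measureReal_def, Measure.map_apply hX measurableSet_Iic]
  rfl

theorem isLeast_lowerQuantile (hX : Measurable X) (hα : α ∈ Set.Ioo (0 : ℝ) 1) :
    IsLeast {x | α ≤ (μ {ω | X ω ≤ x}).toReal} (lowerQuantile μ X α) := by
  have := Measure.isProbabilityMeasure_map (μ := μ) hX.aemeasurable
  simpa only [lowerQuantile, ← cdf_map_eq_toReal_measure_le hX] using
    isLeast_setOf_le_cdf (μ.map X) hα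

theorem lowerQuantile_comp_of_strictMono (hX : Measurable X) {φ : ℝ → ℝ} (hφ : StrictMono φ)
    (hφc : Continuous φ) (hα : α ∈ Set.Ioo (0 : ℝ) 1) :
    lowerQuantile μ (fun ω => φ (X ω)) α = φ (lowerQuantile μ X α) := by
  set q := lowerQuantile μ X α
  obtain ⟨hq_mem, hq_least⟩ := isLeast_lowerQuantile (μ := μ) hX hα
  have h_preimage : ∀ x, {ω | φ (X ω) ≤ φ x} = {ω | X ω ≤ x} := fun x => by
    simp only [hφ.le_iff_le]
  refine IsLeast.csInf_eq ⟨?_, fun y hy => le_of_not_gt fun hyq => ?_⟩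
  · simpa only [Set.mem_ofPred_eq, h_preimage] using hq_mem
  by_cases hy_range : y ∈ Set.range φ
  · obtain ⟨x, rfl⟩ := hy_range
    have : x ∈ {x | α ≤ (μ {ω | X ω ≤ x}).toReal} := by
      simpa only [Set.mem_ofPred_eq, h_preimage] using hy
    exact (hφ.lt_iff_lt.1 hyq).not_ge (hq_least this)
  · -- the range of `φ` is an interval containing `φ q > y` but not `y`, so it lies above `y`
    have h_empty : {ω | φ (X ω) ≤ y} = ∅ := Set.eq_empty_of_forall_notMem fun ω hω =>
      hy_range ((isPreconnected_range hφc).ordConnected.out ⟨X ω, rfl⟩ ⟨q, rfl⟩ ⟨hω, hyq.le⟩)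
    simp only [Set.mem_ofPred_eq, h_empty, measure_empty, ENNReal.toReal_zero] at hy
    exact hy.not_gt hα.1

end LowerQuantile

theorem bregman_superquantile_eq_superquantile_of_transform_general
    {Ω : Type*} [MeasurableSpace Ω] (μ : Measure Ω) [IsProbabilityMeasure μ]
    (X : Ω → ℝ) (hXm : Measurable X)
    (φ : ℝ → ℝ) (hφ : StrictMono φ) (hφc : Continuous φ)
    (α : ℝ) (hα : α ∈ Set.Ioo (0:ℝ) 1) :
    φ (lowerQuantile μ X α) = lowerQuantile μ (fun ω => φ (X ω)) α ∧
      Function.invFun φ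
          ((∫ ω in {ω | lowerQuantile μ X α ≤ X ω}, φ (X ω) ∂μ) / (1 - α)) =
        Function.invFun φ
          ((∫ ω in {ω | lowerQuantile μ (fun ω => φ (X ω)) α ≤ φ (X ω)},
              φ (X ω) ∂μ) / (1 - α)) := by
  have h_quantile := (lowerQuantile_comp_of_strictMono (μ := μ) hXm hφ hφc hα).symm
  refine ⟨h_quantile, ?_⟩
  simp only [← h_quantile, hφ.le_iff_le]

/-- Link between the Bregman superquantile and the classical superquantile:
`Q_α^{dγ}(X) = (γ')⁻¹(Q_α(γ'(X)))`, and in particular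
`γ'(F_X^{-1}(α)) = F_{γ'(X)}^{-1}(α)`. -/
theorem bregman_superquantile_eq_superquantile_of_transform
    {Ω : Type*} [MeasurableSpace Ω] (μ : Measure Ω) [IsProbabilityMeasure μ]
    (X : Ω → ℝ) (hXm : Measurable X)
    (hcont : Continuous fun x : ℝ => (μ {ω | X ω ≤ x}).toReal)
    (φ : ℝ → ℝ) (hφ : StrictMono φ) (hφc : Continuous φ)
    (α : ℝ) (hα : α ∈ Set.Ioo (0:ℝ) 1) :
    φ (lowerQuantile μ X α) = lowerQuantile μ (fun ω => φ (X ω)) α ∧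
      Function.invFun φ
          ((∫ ω in {ω | lowerQuantile μ X α ≤ X ω}, φ (X ω) ∂μ) / (1 - α)) =
        Function.invFun φ
          ((∫ ω in {ω | lowerQuantile μ (fun ω => φ (X ω)) α ≤ φ (X ω)},
              φ (X ω) ∂μ) / (1 - α)) :=
  bregman_superquantile_eq_superquantile_of_transform_general μ X hXm φ hφ hφc α hα
end

section
/- The Bregman superquantile is monotone: if X ≤ X' almost surely (both with continuous distributions supported in dom_γ), then Q_α^{dγ}(X) ≤ Q_α^{dγ}(X'). -/
open MeasureTheory

/-- Bregman superquantile `(γ')⁻¹(E[γ'(X) | X ≥ F_X^{-1}(α)])`. -/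
noncomputable def bregmanSuperquantile {Ω : Type*} [MeasurableSpace Ω] (μ : Measure Ω)
    (φ : ℝ → ℝ) (X : Ω → ℝ) (α : ℝ) : ℝ :=
  Function.invFun φ
    ((∫ ω in {ω | lowerQuantile μ X α ≤ X ω}, φ (X ω) ∂μ) /
      (μ {ω | lowerQuantile μ X α ≤ X ω}).toReal)

/-!
For a continuous distribution the tail event `{q_α ≤ X}` has probability exactly `1 - α`, for
`X` and `X'` alike. Among events of probability `1 - α` the superlevel set `{φ q'_α ≤ φ X'}`
maximizes the integral of `φ ∘ X'`, so
`E[φ X | q_α ≤ X] ≤ E[φ X' | q_α ≤ X] ≤ E[φ X' | q'_α ≤ X']`.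
Both conditional means lie in the interval `range φ`, on which `invFun φ` is monotone.
-/

open ProbabilityTheory Set Filter Topology

theorem StrictMono.monotoneOn_invFun {α β : Type*} [LinearOrder α] [Preorder β] [Nonempty α]
    {f : α → β} (hf : StrictMono f) : MonotoneOn (Function.invFun f) (range f) := by
  rintro _ ⟨x, rfl⟩ _ ⟨y, rfl⟩ hxy
  rw [Function.leftInverse_invFun hf.injective x, Function.leftInverse_invFun hf.injective y]
  exact hf.le_iff_le.mp hxy

theorem Continuous.apply_sInf_setOf_le_eq {f : ℝ → ℝ} (hf : Continuous f) {a b α : ℝ}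
    (hbot : Tendsto f atBot (𝓝 a)) (htop : Tendsto f atTop (𝓝 b)) (haα : a < α) (hαb : α < b) :
    f (sInf {x | α ≤ f x}) = α := by
  set A := {x | α ≤ f x}
  have hne : A.Nonempty := (htop.eventually_const_le hαb).exists
  obtain ⟨m, hm⟩ := eventually_atBot.mp (hbot.eventually_lt_const haα)
  have hbdd : BddBelow A := ⟨m, fun x hx => le_of_not_gt fun hxm => (hm x hxm.le).not_ge hx⟩
  have hmem : sInf A ∈ A := (isClosed_le continuous_const hf).csInf_mem hne hbdd
  have hbelow : Iio (sInf A) ⊆ {x | f x ≤ α} := fun x hx => by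
    have hxA : x ∉ A := notMem_of_lt_csInf hx hbdd
    simp only [A, mem_ofPred_eq, not_le] at hxA ⊢
    exact hxA.le
  have hle : sInf A ∈ {x | f x ≤ α} := by
    rw [← (isClosed_le hf continuous_const).closure_subset_iff, closure_Iio] at hbelow
    exact hbelow (mem_Iic.2 le_rfl)
  exact le_antisymm hle hmem

theorem cdf_map_apply {Ω : Type*} [MeasurableSpace Ω] {μ : Measure Ω} [IsProbabilityMeasure μ]
    {X : Ω → ℝ} (hX : Measurable X) (x : ℝ) :
    cdf (μ.map X) x = (μ {ω | X ω ≤ x}).toReal := by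
  have := Measure.isProbabilityMeasure_map (μ := μ) hX.aemeasurable
  rw [cdf_eq_real, measureReal_def, Measure.map_apply hX measurableSet_Iic]
  rfl

theorem measure_singleton_eq_zero_of_continuous_cdf {ν : Measure ℝ} [IsProbabilityMeasure ν]
    (h : Continuous (cdf ν)) (x : ℝ) : ν {x} = 0 := by
  rw [← measure_cdf ν, StieltjesFunction.measure_singleton,
    ((monotone_cdf ν).continuousWithinAt_Iio_iff_leftLim_eq.mp h.continuousWithinAt), sub_self,
    ENNReal.ofReal_zero]

theorem measure_lowerQuantile_le {Ω : Type*} [MeasurableSpace Ω] {μ : Measure Ω}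
    [IsProbabilityMeasure μ] {X : Ω → ℝ} (hX : Measurable X)
    (hcX : Continuous fun x : ℝ => (μ {ω | X ω ≤ x}).toReal) {α : ℝ} (hα : α ∈ Ioo 0 1) :
    μ {ω | lowerQuantile μ X α ≤ X ω} = 1 - ENNReal.ofReal α := by
  have := Measure.isProbabilityMeasure_map (μ := μ) hX.aemeasurable
  simp_rw [← cdf_map_apply hX] at hcX
  set q := lowerQuantile μ X α
  have hq : cdf (μ.map X) q = α := by
    simp_rw [q, lowerQuantile, ← cdf_map_apply hX]
    exact hcX.apply_sInf_setOf_le_eq (tendsto_cdf_atBot _) (tendsto_cdf_atTop _) hα.1 hα.2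
  calc μ {ω | q ≤ X ω} = μ.map X (Ici q) := (Measure.map_apply hX measurableSet_Ici).symm
    _ = μ.map X (Iic q)ᶜ := by
      rw [compl_Iic]
      exact (measure_congr
        (Ioi_ae_eq_Ici' (measure_singleton_eq_zero_of_continuous_cdf hcX q))).symm
    _ = 1 - ENNReal.ofReal α := by
      rw [prob_compl_eq_one_sub measurableSet_Iic, ← ofReal_cdf, hq]

theorem setIntegral_le_setIntegral_setOf_le {Ω : Type*} [MeasurableSpace Ω] {μ : Measure Ω}
    [IsFiniteMeasure μ] {f : Ω → ℝ} (hf : Measurable f) (hfi : Integrable f μ) (q : ℝ)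
    {s : Set Ω} (hs : MeasurableSet s) (hμs : μ s = μ {ω | q ≤ f ω}) :
    ∫ ω in s, f ω ∂μ ≤ ∫ ω in {ω | q ≤ f ω}, f ω ∂μ := by
  set t := {ω | q ≤ f ω}
  have ht : MeasurableSet t := hf measurableSet_Ici
  have hgi : Integrable (fun ω => f ω - q) μ := hfi.sub (integrable_const q)
  -- `f - q` is nonnegative exactly on `t`, so its indicator on `t` dominates that on any `s`.
  have hg : ∫ ω in s, (f ω - q) ∂μ ≤ ∫ ω in t, (f ω - q) ∂μ := by
    rw [← integral_indicator hs, ← integral_indicator ht]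
    refine integral_mono (hgi.indicator hs) (hgi.indicator ht) fun ω => ?_
    by_cases hω : q ≤ f ω
    · rw [indicator_of_mem (show ω ∈ t from hω)]
      exact indicator_apply_le' (fun _ => le_rfl) fun _ => sub_nonneg.mpr hω
    · rw [indicator_of_notMem (show ω ∉ t from hω)]
      exact indicator_apply_le' (fun _ => (sub_neg.mpr (not_le.mp hω)).le) fun _ => le_rfl
  rw [integral_sub hfi.integrableOn (integrable_const q).integrableOn,
    integral_sub hfi.integrableOn (integrable_const q).integrableOn, setIntegral_const,
    setIntegral_const, measureReal_def, measureReal_def, hμs] at hg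
  linarith

theorem Set.OrdConnected.setAverage_mem {Ω : Type*} [MeasurableSpace Ω] {μ : Measure Ω}
    {S : Set ℝ} (hS : S.OrdConnected) {g : Ω → ℝ} {s : Set Ω} (h0 : μ s ≠ 0) (hfin : μ s ≠ ⊤)
    (hg : IntegrableOn g s μ) (hgS : ∀ ω ∈ s, g ω ∈ S) : ⨍ ω in s, g ω ∂μ ∈ S := by
  obtain ⟨ω₁, hω₁, h₁⟩ := exists_le_setAverage h0 hfin hg
  obtain ⟨ω₂, hω₂, h₂⟩ := exists_setAverage_le h0 hfin hg
  exact hS.out (hgS ω₁ hω₁) (hgS ω₂ hω₂) ⟨h₁, h₂⟩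

theorem setIntegral_div_measure_mem_range {Ω : Type*} [MeasurableSpace Ω] {μ : Measure Ω}
    {φ : ℝ → ℝ} (hφ : Continuous φ) {f : Ω → ℝ} {s : Set Ω} (h0 : μ s ≠ 0) (hfin : μ s ≠ ⊤)
    (hint : IntegrableOn (fun ω => φ (f ω)) s μ) :
    (∫ ω in s, φ (f ω) ∂μ) / (μ s).toReal ∈ range φ := by
  rw [div_eq_inv_mul, ← measureReal_def, ← smul_eq_mul, ← setAverage_eq]
  exact (isPreconnected_range hφ).ordConnected.setAverage_mem h0 hfin hint
    fun ω _ => mem_range_self (f ω)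

/-- Monotonicity of the Bregman superquantile: if `X ≤ X'` a.s. (with continuous
distributions), then `Q_α^{dγ}(X) ≤ Q_α^{dγ}(X')`. -/
theorem bregmanSuperquantile_mono {Ω : Type*} [MeasurableSpace Ω]
    (μ : Measure Ω) [IsProbabilityMeasure μ]
    (φ : ℝ → ℝ) (hφ : StrictMono φ) (hφc : Continuous φ)
    (X X' : Ω → ℝ) (hXm : Measurable X) (hX'm : Measurable X')
    (hcX : Continuous fun x : ℝ => (μ {ω | X ω ≤ x}).toReal)
    (hcX' : Continuous fun x : ℝ => (μ {ω | X' ω ≤ x}).toReal)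
    (hintX : Integrable (fun ω => φ (X ω)) μ)
    (hintX' : Integrable (fun ω => φ (X' ω)) μ)
    (hle : ∀ᵐ ω ∂μ, X ω ≤ X' ω)
    (α : ℝ) (hα : α ∈ Set.Ioo (0:ℝ) 1) :
    bregmanSuperquantile μ φ X α ≤ bregmanSuperquantile μ φ X' α := by
  set s := {ω | lowerQuantile μ X α ≤ X ω}
  set s' := {ω | lowerQuantile μ X' α ≤ X' ω}
  have hs : μ s = 1 - ENNReal.ofReal α := measure_lowerQuantile_le hXm hcX hα
  have hs' : μ s' = 1 - ENNReal.ofReal α := measure_lowerQuantile_le hX'm hcX' hα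
  have hs0 : 1 - ENNReal.ofReal α ≠ 0 := (tsub_pos_iff_lt.mpr (ENNReal.ofReal_lt_one.mpr hα.2)).ne'
  have hs'φ : {ω | φ (lowerQuantile μ X' α) ≤ φ (X' ω)} = s' := by
    ext ω
    exact hφ.le_iff_le
  have htail : ∫ ω in s, φ (X' ω) ∂μ ≤ ∫ ω in s', φ (X' ω) ∂μ := by
    rw [← hs'φ]
    exact setIntegral_le_setIntegral_setOf_le (f := fun ω => φ (X' ω))
      (hφc.measurable.comp hX'm) hintX' _ (hXm measurableSet_Ici) (by rw [hs'φ, hs, hs'])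
  have hmean : (∫ ω in s, φ (X ω) ∂μ) / (μ s).toReal ≤
      (∫ ω in s', φ (X' ω) ∂μ) / (μ s').toReal := by
    rw [hs, hs']
    gcongr
    exact (setIntegral_mono_ae hintX.integrableOn hintX'.integrableOn
      (hle.mono fun ω h => hφ.monotone h)).trans htail
  exact hφ.monotoneOn_invFun
    (setIntegral_div_measure_mem_range hφc (hs ▸ hs0) (measure_ne_top μ s) hintX.integrableOn)
    (setIntegral_div_measure_mem_range hφc (hs' ▸ hs0) (measure_ne_top μ s') hintX'.integrableOn)
    hmean
end

section
/- Let φ(x) = (x^β − 1)/β for some β ≠ 0 (or φ(x) = ln x). Then the associated Bregman superquantile is positively homogeneous: for every random variable X with continuous distribution supported in (0,∞) and every λ > 0, φ^{-1}( E_α[φ(λX)] ) = λ φ^{-1}( E_α[φ(X)] ), where E_α denotes expectation conditional on X ≥ F_X^{-1}(α). -/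
/-!
A continuous distribution puts mass exactly `1 - α` on the tail `{X ≥ q_α}`, so the tail average
`E_α` is affine: `E_α[a f + b] = a E_α[f] + b`. Both transforms are affine under scaling,
`φ_β(λx) = λ^β φ_β(x) + φ_β(λ)` and `log (λx) = log x + log λ`. Hence
`1 + β E_α[φ_β(λX)] = λ^β (1 + β E_α[φ_β(X)])`, and taking `1/β`-th powers gives the claim,
since the base `1 + β E_α[φ_β(X)] = E_α[X^β]` is nonnegative; in the logarithmic case one
exponentiates instead.
-/

open MeasureTheory

/-- Conditional expectation `E_α[f(X)] = E[f(X) 1_{X ≥ q_α}]/(1-α)` (continuous cdf). -/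
noncomputable def condExpAlpha {Ω : Type*} [MeasurableSpace Ω] (μ : Measure Ω)
    (X : Ω → ℝ) (α : ℝ) (f : ℝ → ℝ) : ℝ :=
  (∫ ω in {ω | lowerQuantile μ X α ≤ X ω}, f (X ω) ∂μ) / (1 - α)

open Filter Topology ProbabilityTheory Set

theorem Continuous.apply_csInf_setOf_le_eq {F : ℝ → ℝ} (hF : Continuous F)
    (hbot : Tendsto F atBot (𝓝 0)) (htop : Tendsto F atTop (𝓝 1)) {α : ℝ}
    (hα : α ∈ Ioo (0 : ℝ) 1) : F (sInf {x | α ≤ F x}) = α := by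
  set T := {x | α ≤ F x}
  have hne : T.Nonempty := (htop.eventually (eventually_ge_nhds hα.2)).exists
  obtain ⟨b, hb⟩ := eventually_atBot.1 (hbot.eventually (eventually_lt_nhds hα.1))
  have hbdd : BddBelow T := ⟨b, fun y hy => le_of_not_ge fun hyb => (hb y hyb).not_ge hy⟩
  have hmem : sInf T ∈ T := (isClosed_le continuous_const hF).csInf_mem hne hbdd
  refine le_antisymm ?_ hmem
  refine le_of_tendsto (x := 𝓝[<] sInf T) (hF.continuousAt.tendsto.mono_left nhdsWithin_le_nhds) ?_
  filter_upwards [self_mem_nhdsWithin] with x hx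
  exact le_of_lt (not_le.1 (notMem_of_lt_csInf (s := T) hx hbdd))

theorem ProbabilityTheory.measureReal_Ici_eq_one_sub_cdf (ν : Measure ℝ) [IsProbabilityMeasure ν]
    {x : ℝ} (hx : ContinuousAt (cdf ν) x) : ν.real (Ici x) = 1 - cdf ν x := by
  have hleft : Function.leftLim (cdf ν) x = cdf ν x := hx.continuousWithinAt.leftLim_eq
  nth_rewrite 1 [← measure_cdf ν]
  rw [measureReal_def, StieltjesFunction.measure_Ici _ (tendsto_cdf_atTop ν), hleft,
    ENNReal.toReal_ofReal (sub_nonneg.2 (cdf_le_one ν x))]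

section condExpAlpha

variable {Ω : Type*} [MeasurableSpace Ω] {μ : Measure Ω} {X : Ω → ℝ} {α : ℝ}

theorem measureReal_setOf_lowerQuantile_le [IsProbabilityMeasure μ] (hXm : Measurable X)
    (hcont : Continuous fun x : ℝ => (μ {ω | X ω ≤ x}).toReal) (hα : α ∈ Ioo (0 : ℝ) 1) :
    μ.real {ω | lowerQuantile μ X α ≤ X ω} = 1 - α := by
  set ν := μ.map X
  have : IsProbabilityMeasure ν := Measure.isProbabilityMeasure_map hXm.aemeasurable
  have hcdf (x : ℝ) : (μ {ω | X ω ≤ x}).toReal = cdf ν x := by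
    rw [cdf_eq_real, map_measureReal_apply hXm measurableSet_Iic]; rfl
  have hcont' : Continuous (cdf ν) := by simpa only [hcdf] using hcont
  have hq : cdf ν (lowerQuantile μ X α) = α := by
    simp only [lowerQuantile, hcdf]
    exact hcont'.apply_csInf_setOf_le_eq (tendsto_cdf_atBot ν) (tendsto_cdf_atTop ν) hα
  calc μ.real {ω | lowerQuantile μ X α ≤ X ω} = ν.real (Ici (lowerQuantile μ X α)) :=
        (map_measureReal_apply hXm measurableSet_Ici).symm
    _ = 1 - α := by rw [measureReal_Ici_eq_one_sub_cdf ν hcont'.continuousAt, hq]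

theorem condExpAlpha_congr {f g : ℝ → ℝ} (h : ∀ᵐ ω ∂μ, f (X ω) = g (X ω)) :
    condExpAlpha μ X α f = condExpAlpha μ X α g := by
  rw [condExpAlpha, condExpAlpha, integral_congr_ae (ae_restrict_of_ae h)]

theorem condExpAlpha_nonneg {f : ℝ → ℝ} (hα : α ≤ 1) (hf : ∀ᵐ ω ∂μ, 0 ≤ f (X ω)) :
    0 ≤ condExpAlpha μ X α f :=
  div_nonneg (integral_nonneg_of_ae (ae_restrict_of_ae hf)) (sub_nonneg.2 hα)

theorem condExpAlpha_mul_add [IsFiniteMeasure μ]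
    (htail : μ.real {ω | lowerQuantile μ X α ≤ X ω} = 1 - α) (hα : α ≠ 1) {f : ℝ → ℝ}
    (hf : IntegrableOn (fun ω => f (X ω)) {ω | lowerQuantile μ X α ≤ X ω} μ) (a b : ℝ) :
    condExpAlpha μ X α (fun x => a * f x + b) = a * condExpAlpha μ X α f + b := by
  have h1 : 1 - α ≠ 0 := sub_ne_zero.2 hα.symm
  rw [condExpAlpha, condExpAlpha, integral_add (hf.const_mul a) (integrable_const b),
    integral_const_mul, setIntegral_const, htail, smul_eq_mul]
  field_simp

theorem condExpAlpha_rpow_homogeneous [IsFiniteMeasure μ]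
    (htail : μ.real {ω | lowerQuantile μ X α ≤ X ω} = 1 - α) (hα : α < 1)
    (hX : ∀ᵐ ω ∂μ, 0 ≤ X ω) {β : ℝ} (hβ : β ≠ 0)
    (hint : IntegrableOn (fun ω => (X ω ^ β - 1) / β) {ω | lowerQuantile μ X α ≤ X ω} μ)
    {lam : ℝ} (hlam : 0 ≤ lam) :
    (1 + β * condExpAlpha μ X α (fun x => ((lam * x) ^ β - 1) / β)) ^ (1 / β) =
      lam * (1 + β * condExpAlpha μ X α (fun x => (x ^ β - 1) / β)) ^ (1 / β) := by
  set E := condExpAlpha μ X α (fun x => (x ^ β - 1) / β)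
  have hscale : condExpAlpha μ X α (fun x => ((lam * x) ^ β - 1) / β) =
      lam ^ β * E + (lam ^ β - 1) / β := by
    rw [← condExpAlpha_mul_add htail hα.ne hint]
    refine condExpAlpha_congr (hX.mono fun ω hω => ?_)
    rw [Real.mul_rpow hlam hω]
    field_simp
    ring
  have hmean : β * E + 1 = condExpAlpha μ X α (fun x => x ^ β) := by
    rw [← condExpAlpha_mul_add htail hα.ne hint]
    exact condExpAlpha_congr (ae_of_all _ fun ω => by field_simp; ring)
  have hA : 0 ≤ 1 + β * E := by
    rw [add_comm, hmean]
    exact condExpAlpha_nonneg hα.le (hX.mono fun ω hω => Real.rpow_nonneg hω β)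
  calc (1 + β * condExpAlpha μ X α (fun x => ((lam * x) ^ β - 1) / β)) ^ (1 / β)
      = (lam ^ β * (1 + β * E)) ^ (1 / β) := by
        rw [hscale]
        congr 1
        field_simp
        ring
    _ = lam * (1 + β * E) ^ (1 / β) := by
        rw [Real.mul_rpow (Real.rpow_nonneg hlam β) hA, one_div, Real.rpow_rpow_inv hlam hβ]

theorem condExpAlpha_log_homogeneous [IsFiniteMeasure μ]
    (htail : μ.real {ω | lowerQuantile μ X α ≤ X ω} = 1 - α) (hα : α ≠ 1)
    (hX : ∀ᵐ ω ∂μ, X ω ≠ 0)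
    (hint : IntegrableOn (fun ω => Real.log (X ω)) {ω | lowerQuantile μ X α ≤ X ω} μ)
    {lam : ℝ} (hlam : 0 < lam) :
    Real.exp (condExpAlpha μ X α (fun x => Real.log (lam * x))) =
      lam * Real.exp (condExpAlpha μ X α Real.log) := by
  have hshift : condExpAlpha μ X α (fun x => Real.log (lam * x)) =
      1 * condExpAlpha μ X α Real.log + Real.log lam := by
    rw [← condExpAlpha_mul_add htail hα hint]
    exact condExpAlpha_congr (hX.mono fun ω hω => by rw [Real.log_mul hlam.ne' hω]; ring)
  rw [hshift, one_mul, Real.exp_add, Real.exp_log hlam, mul_comm]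

end condExpAlpha

/-- `y ↦ (1 + β y) ^ (1 / β)` and `exp` are the inverses of `φ_β` and `log`. -/
theorem bregmanSuperquantile_homogeneous {Ω : Type*} [MeasurableSpace Ω]
    (μ : Measure Ω) [IsProbabilityMeasure μ]
    (X : Ω → ℝ) (hXm : Measurable X) (hXpos : ∀ᵐ ω ∂μ, 0 < X ω)
    (hcont : Continuous fun x : ℝ => (μ {ω | X ω ≤ x}).toReal)
    (α : ℝ) (hα : α ∈ Set.Ioo (0:ℝ) 1) (lam : ℝ) (hlam : 0 < lam) :
    (∀ β : ℝ, β ≠ 0 →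
      Integrable (fun ω => (X ω ^ β - 1) / β) μ →
      (1 + β * condExpAlpha μ X α (fun x => ((lam * x) ^ β - 1) / β)) ^ (1 / β) =
        lam * (1 + β * condExpAlpha μ X α (fun x => (x ^ β - 1) / β)) ^ (1 / β)) ∧
    (Integrable (fun ω => Real.log (X ω)) μ →
      Real.exp (condExpAlpha μ X α (fun x => Real.log (lam * x))) =
        lam * Real.exp (condExpAlpha μ X α Real.log)) := by
  have htail := measureReal_setOf_lowerQuantile_le hXm hcont hα
  refine ⟨fun β hβ hint => ?_, fun hint => ?_⟩
  · exact condExpAlpha_rpow_homogeneous htail hα.2 (hXpos.mono fun _ h => h.le) hβ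
      hint.integrableOn hlam.le
  · exact condExpAlpha_log_homogeneous htail hα.2.ne (hXpos.mono fun _ h => h.ne')
      hint.integrableOn hlam
end

section
/- Let γ(x) = e^x, α = 0.95, and X uniform on [0,1]. Then the Bregman superquantile R(V) = ln( E[e^V 1_{V ≥ q_α^V}]/(1−α) ) satisfies R(2X) > 2R(X); explicitly, ln((e² − e^{1.9})/(2·0.05)) > 2 ln((e − e^{0.95})/0.05). Hence the exponential Bregman superquantile is neither subadditive nor positively homogeneous. -/
/-!
`R(λX)` is the logarithm of the average of `e^{λx}` over `[α, 1]`, so `R(2X) > 2R(X)` is the strict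
Cauchy–Schwarz inequality `(⨍ eˣ)² < ⨍ e^{2x}`. Writing `eᵇ ∓ eᵃ = 2 e^m (sinh y, cosh y)` with `m`
the midpoint and `y` the half-length of the interval, this becomes `sinh y < y cosh y`, i.e.
`tanh y < y`, which holds for every `y > 0` (here `y = 0.025`).
-/

open MeasureTheory Real Set

theorem integral_exp_mul_Icc {a b c : ℝ} (hab : a ≤ b) (hc : c ≠ 0) :
    ∫ x in Icc a b, exp (c * x) = (exp (c * b) - exp (c * a)) / c := by
  rw [integral_Icc_eq_integral_Ioc, ← intervalIntegral.integral_of_le hab,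
    intervalIntegral.integral_comp_mul_left exp hc, integral_exp, smul_eq_mul]
  field_simp

theorem sinh_lt_mul_cosh {y : ℝ} (hy : 0 < y) : sinh y < y * cosh y := by
  have hmono : StrictMonoOn (fun t => t * cosh t - sinh t) (Ici 0) := by
    refine strictMonoOn_of_deriv_pos (convex_Ici 0) (by fun_prop) fun t ht => ?_
    rw [interior_Ici] at ht
    have hderiv : HasDerivAt (fun t => t * cosh t - sinh t) (t * sinh t) t :=
      (((hasDerivAt_id' t).mul (hasDerivAt_id' t).cosh).sub
        (hasDerivAt_id' t).sinh).congr_deriv (by ring)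
    rw [hderiv.deriv]
    exact mul_pos ht (sinh_pos_iff.mpr ht)
  have := hmono self_mem_Ici hy.le hy
  simp only [zero_mul, sinh_zero, sub_zero] at this
  linarith

theorem sq_exp_sub_exp_lt {a b : ℝ} (hab : a < b) :
    (exp b - exp a) ^ 2 < (b - a) * ((exp (2 * b) - exp (2 * a)) / 2) := by
  set m := (a + b) / 2
  set y := (b - a) / 2
  have hy : 0 < y := by simp only [y]; linarith
  have hb : exp b = exp m * exp y := by rw [← exp_add]; congr 1; ring
  have ha : exp a = exp m * exp (-y) := by rw [← exp_add]; congr 1; ring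
  have hsub : exp b - exp a = 2 * exp m * sinh y := by rw [sinh_eq, hb, ha]; ring
  have hadd : exp b + exp a = 2 * exp m * cosh y := by rw [cosh_eq, hb, ha]; ring
  have hsq : exp (2 * b) - exp (2 * a) = (exp b - exp a) * (exp b + exp a) := by
    rw [two_mul, two_mul, exp_add, exp_add]; ring
  have hs : 0 < sinh y := sinh_pos_iff.mpr hy
  have hlt := sinh_lt_mul_cosh hy
  rw [hsq, hsub, hadd, show b - a = 2 * y by ring]
  have hE : 0 < exp m ^ 2 := by positivity
  nlinarith [mul_lt_mul_of_pos_left hlt (mul_pos hE hs)]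

theorem two_mul_log_integral_exp_lt {a b : ℝ} (hab : a < b) :
    2 * log ((∫ x in Icc a b, exp x) / (b - a)) <
      log ((∫ x in Icc a b, exp (2 * x)) / (b - a)) := by
  have h1 := integral_exp_mul_Icc (c := 1) hab.le one_ne_zero
  simp only [one_mul, div_one] at h1
  rw [h1, integral_exp_mul_Icc hab.le two_ne_zero]
  have hba : 0 < b - a := sub_pos.mpr hab
  have hpos : 0 < exp b - exp a := sub_pos.mpr (exp_lt_exp.mpr hab)
  have hsq : ((exp b - exp a) / (b - a)) ^ 2 < (exp (2 * b) - exp (2 * a)) / 2 / (b - a) := by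
    rw [div_pow, div_lt_div_iff₀ (by positivity) hba]
    nlinarith [sq_exp_sub_exp_lt hab]
  calc 2 * log ((exp b - exp a) / (b - a))
      = log (((exp b - exp a) / (b - a)) ^ 2) := by rw [log_pow]; norm_num
    _ < log ((exp (2 * b) - exp (2 * a)) / 2 / (b - a)) := log_lt_log (by positivity) hsq

/-- For `γ(x) = eˣ`, `α = 0.95` and `X` uniform on `[0,1]`, the Bregman superquantile
`R(λX) = ln(E[e^{λX} 1_{X ≥ α}]/(1-α))` satisfies `R(2X) > 2R(X)`: explicitly
`ln((e² - e^{1.9})/(2·0.05)) > 2 ln((e - e^{0.95})/0.05)`.  Hence the exponential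
Bregman superquantile is neither subadditive nor positively homogeneous. -/
theorem exp_bregman_not_subadditive
    (R : ℝ → ℝ)
    (hR : ∀ lam : ℝ, R lam =
      Real.log ((∫ x in Set.Icc (0.95:ℝ) 1, Real.exp (lam * x)) / (1 - 0.95))) :
    R 2 > 2 * R 1 ∧
      Real.log ((Real.exp 2 - Real.exp 1.9) / (2 * 0.05)) >
        2 * Real.log ((Real.exp 1 - Real.exp 0.95) / 0.05) ∧
      R 2 ≠ 2 * R 1 := by
  have hR1 : R 1 = log ((∫ x in Icc (0.95:ℝ) 1, exp x) / (1 - 0.95)) := by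
    simpa only [one_mul] using hR 1
  have hgap : R 2 > 2 * R 1 := by
    rw [hR1, hR 2]
    exact two_mul_log_integral_exp_lt (by norm_num)
  have hR1_eq : R 1 = log ((exp 1 - exp 0.95) / 0.05) := by
    rw [hR 1, integral_exp_mul_Icc (by norm_num) one_ne_zero]
    norm_num
  have hR2_eq : R 2 = log ((exp 2 - exp 1.9) / (2 * 0.05)) := by
    rw [hR 2, integral_exp_mul_Icc (by norm_num) two_ne_zero]
    norm_num [div_div]
  exact ⟨hgap, hR1_eq ▸ hR2_eq ▸ hgap, hgap.ne'⟩
end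

section
/- If a, b are positive integers and x ∈ [0,1] with a/(a+b−1) ≥ 2x, then the regularized incomplete Beta function satisfies I_x(a,b) = P(Bin(a+b−1, x) ≥ a) ≤ exp(−(3/8)(a+b−1)x). -/
/-!
The tail `∑_{k > a} b_{n+1,k}` of the Bernstein polynomials `b_{n,k} = C(n,k) x^k (1-x)^(n-k)`
has a telescoping derivative, `b'_{n+1,k+1} = (n+1) (b_{n,k} - b_{n,k+1})`, equal to
`(n+1) b_{n,a}`, a multiple of the Beta density. Integrating from `0`, where the tail vanishes,
and normalising by its value `1` at `x = 1` identifies it with `I_x(a+1, n-a+1)`.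

The bound is a Chernoff bound with `e^λ = 2`: `2^a P(Bin(n,x) ≥ a) ≤ E 2^Bin = (1+x)^n ≤ e^{nx}`,
so `a ≥ 2nx` gives `P(Bin(n,x) ≥ a) ≤ e^{-(2 log 2 - 1) n x}`, and `2 log 2 - 1 > 3/8`.
-/

open MeasureTheory

/-- The regularized incomplete Beta function for integer parameters. -/
noncomputable def regIncBeta (a b : ℕ) (x : ℝ) : ℝ :=
  (∫ t in Set.Ioo (0:ℝ) x, t ^ (a - 1) * (1 - t) ^ (b - 1)) /
    ∫ t in Set.Ioo (0:ℝ) 1, t ^ (a - 1) * (1 - t) ^ (b - 1)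

/-- `P(Bin(n, x) ≥ a)`. -/
noncomputable def binomTail (n a : ℕ) (x : ℝ) : ℝ :=
  ∑ k ∈ Finset.Icc a n, (n.choose k : ℝ) * x ^ k * (1 - x) ^ (n - k)

open Finset Polynomial

theorem derivative_sum_bernsteinPolynomial_Icc {R : Type*} [CommRing R] {n a : ℕ} (h : a ≤ n) :
    derivative (∑ k ∈ Icc (a + 1) (n + 1), bernsteinPolynomial R (n + 1) k) =
      (n + 1) * bernsteinPolynomial R n a := by
  rw [← map_add_right_Icc, sum_map, derivative_sum]
  simp only [addRightEmbedding_apply, bernsteinPolynomial.derivative_succ_aux, ← mul_sum]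
  have htelescope := sum_Icc_sub h (fun k => -bernsteinPolynomial R n k)
  simp only [neg_sub_neg, bernsteinPolynomial.eq_zero_of_lt R (Nat.lt_succ_self n)] at htelescope
  rw [htelescope, sub_zero]

theorem binomTail_eq_eval_sum_bernsteinPolynomial (n a : ℕ) (x : ℝ) :
    binomTail n a x = (∑ k ∈ Icc a n, bernsteinPolynomial ℝ n k).eval x := by
  simp [binomTail, bernsteinPolynomial, eval_finsetSum]

theorem binomTail_succ_zero (n a : ℕ) : binomTail n (a + 1) 0 = 0 := by
  simp [binomTail_eq_eval_sum_bernsteinPolynomial, eval_finsetSum, bernsteinPolynomial.eval_at_0]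

theorem binomTail_one {n a : ℕ} (h : a ≤ n) : binomTail n a 1 = 1 := by
  simp [binomTail_eq_eval_sum_bernsteinPolynomial, eval_finsetSum, bernsteinPolynomial.eval_at_1, h]

theorem hasDerivAt_binomTail_succ {n a : ℕ} (h : a ≤ n) (x : ℝ) :
    HasDerivAt (binomTail (n + 1) (a + 1))
      ((n + 1) * n.choose a * (x ^ a * (1 - x) ^ (n - a))) x := by
  have hfun : binomTail (n + 1) (a + 1) =
      fun y => (∑ k ∈ Icc (a + 1) (n + 1), bernsteinPolynomial ℝ (n + 1) k).eval y :=
    funext (binomTail_eq_eval_sum_bernsteinPolynomial _ _)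
  rw [hfun]
  refine (Polynomial.hasDerivAt _ x).congr_deriv ?_
  rw [derivative_sum_bernsteinPolynomial_Icc h]
  simp [bernsteinPolynomial]
  ring

theorem binomTail_succ_eq_mul_integral {n a : ℕ} (h : a ≤ n) (x : ℝ) :
    binomTail (n + 1) (a + 1) x =
      (n + 1) * n.choose a * ∫ t in (0 : ℝ)..x, t ^ a * (1 - t) ^ (n - a) := by
  rw [← intervalIntegral.integral_const_mul,
    intervalIntegral.integral_eq_sub_of_hasDerivAt (fun t _ => hasDerivAt_binomTail_succ h t)
      ((by fun_prop : Continuous _).intervalIntegrable _ _), binomTail_succ_zero, sub_zero]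

theorem integral_Ioo_eq_intervalIntegral {f : ℝ → ℝ} {x : ℝ} (hx : 0 ≤ x) :
    ∫ t in Set.Ioo 0 x, f t = ∫ t in (0 : ℝ)..x, f t := by
  rw [intervalIntegral.integral_of_le hx, integral_Ioc_eq_integral_Ioo]

theorem regIncBeta_eq_binomTail {a b : ℕ} (ha : 1 ≤ a) (hb : 1 ≤ b) {x : ℝ} (hx : 0 ≤ x) :
    regIncBeta a b x = binomTail (a + b - 1) a x := by
  obtain ⟨a, rfl⟩ := Nat.exists_eq_add_of_le' ha
  obtain ⟨b, rfl⟩ := Nat.exists_eq_add_of_le' hb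
  have hn : a + 1 + (b + 1) - 1 = a + b + 1 := by omega
  have hab : a ≤ a + b := Nat.le_add_right a b
  have hnorm := binomTail_succ_eq_mul_integral hab 1
  rw [binomTail_one (by omega), Nat.add_sub_cancel_left] at hnorm
  rw [regIncBeta, hn, binomTail_succ_eq_mul_integral hab, Nat.add_sub_cancel_left,
    Nat.add_sub_cancel, Nat.add_sub_cancel, integral_Ioo_eq_intervalIntegral hx,
    integral_Ioo_eq_intervalIntegral zero_le_one]
  have hI : ∫ t in (0 : ℝ)..1, t ^ a * (1 - t) ^ b ≠ 0 :=
    right_ne_zero_of_mul (hnorm ▸ one_ne_zero)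
  rw [div_eq_iff hI]
  linear_combination (∫ t in (0 : ℝ)..x, t ^ a * (1 - t) ^ b) * hnorm

theorem binomTail_mul_pow_le {n a : ℕ} {x r : ℝ} (hx₀ : 0 ≤ x) (hx₁ : x ≤ 1) (hr : 1 ≤ r) :
    binomTail n a x * r ^ a ≤ (r * x + (1 - x)) ^ n := by
  have h1x : 0 ≤ 1 - x := by linarith
  rw [add_pow, binomTail, sum_mul]
  calc ∑ k ∈ Icc a n, (n.choose k : ℝ) * x ^ k * (1 - x) ^ (n - k) * r ^ a
      ≤ ∑ k ∈ Icc a n, (r * x) ^ k * (1 - x) ^ (n - k) * n.choose k := by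
        refine sum_le_sum fun k hk => ?_
        calc (n.choose k : ℝ) * x ^ k * (1 - x) ^ (n - k) * r ^ a
            ≤ n.choose k * x ^ k * (1 - x) ^ (n - k) * r ^ k :=
              mul_le_mul_of_nonneg_left (pow_le_pow_right₀ hr (mem_Icc.mp hk).1) (by positivity)
          _ = (r * x) ^ k * (1 - x) ^ (n - k) * n.choose k := by ring
    _ ≤ ∑ k ∈ range (n + 1), (r * x) ^ k * (1 - x) ^ (n - k) * n.choose k := by
        refine sum_le_sum_of_subset_of_nonneg (fun k hk => ?_) fun k _ _ => ?_
        · simpa [Nat.lt_succ_iff] using (mem_Icc.mp hk).2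
        · positivity

theorem binomTail_le_exp {n a : ℕ} {x : ℝ} (hx₀ : 0 ≤ x) (hx₁ : x ≤ 1) (h : 2 * n * x ≤ a) :
    binomTail n a x ≤ Real.exp (-(3 / 8) * n * x) := by
  have hlog2 := Real.log_two_gt_d9
  have hnx : 0 ≤ (n : ℝ) * x := by positivity
  have hchernoff : binomTail n a x * 2 ^ a ≤ (1 + x) ^ n := by
    convert binomTail_mul_pow_le hx₀ hx₁ one_le_two using 2
    ring
  calc binomTail n a x
      ≤ (1 + x) ^ n / 2 ^ a := by rw [le_div_iff₀ (by positivity)]; exact hchernoff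
    _ ≤ Real.exp (n * x) / Real.exp (2 * n * x * Real.log 2) := by
        gcongr
        · rw [Real.exp_nat_mul]
          gcongr
          linarith [Real.add_one_le_exp x]
        · calc Real.exp (2 * n * x * Real.log 2) ≤ Real.exp (a * Real.log 2) := by gcongr
            _ = 2 ^ a := by rw [Real.exp_nat_mul, Real.exp_log two_pos]
    _ = Real.exp (n * x - 2 * n * x * Real.log 2) := (Real.exp_sub _ _).symm
    _ ≤ Real.exp (-(3 / 8) * n * x) := by
        gcongr
        nlinarith

/-- For positive integers `a`, `b` and `x ∈ [0,1]` with `a/(a+b-1) ≥ 2x`, the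
regularized incomplete Beta function equals the binomial tail probability
`P(Bin(a+b-1, x) ≥ a)` and is bounded by `exp(-(3/8)(a+b-1)x)`. -/
theorem regIncBeta_eq_binomTail_le_exp (a b : ℕ) (ha : 1 ≤ a) (hb : 1 ≤ b)
    (x : ℝ) (hx : x ∈ Set.Icc (0:ℝ) 1)
    (hcond : 2 * x ≤ (a : ℝ) / ((a : ℝ) + b - 1)) :
    regIncBeta a b x = binomTail (a + b - 1) a x ∧
      binomTail (a + b - 1) a x ≤
        Real.exp (-(3 / 8) * ((a : ℝ) + b - 1) * x) := by
  obtain ⟨hx₀, hx₁⟩ := hx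
  have hn : ((a + b - 1 : ℕ) : ℝ) = a + b - 1 := by
    rw [Nat.cast_sub (by omega)]
    push_cast
    ring
  have hpos : (0 : ℝ) < a + b - 1 := by
    have : (1 : ℝ) ≤ a := by exact_mod_cast ha
    have : (1 : ℝ) ≤ b := by exact_mod_cast hb
    linarith
  refine ⟨regIncBeta_eq_binomTail ha hb hx₀, ?_⟩
  rw [← hn]
  refine binomTail_le_exp hx₀ hx₁ ?_
  rw [le_div_iff₀ hpos] at hcond
  rw [hn]
  linarith
end

section
/- The function g(x,y) = (min(x,y) − xy)/((1−x)^{3/2−ε}(1−y)^{3/2−ε}) with ε > 0 is integrable on (α,1) × (α,1) for any α ∈ (0,1); in particular ∫_α^β ∫_α^β g(x,y) dx dy remains bounded as β → 1⁻, with the tail contribution of order (1−β)^{2ε}. -/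
open MeasureTheory Filter Asymptotics

/-- Asymmetric half of the key numerator bound. -/
lemma aux_num_bound {x y : ℝ} (hx0 : 0 ≤ x) (hx1 : x < 1) (hy1 : y < 1) (hxy : x ≤ y) :
    x - x * y ≤ (1 - x) ^ ((1:ℝ)/2) * (1 - y) ^ ((1:ℝ)/2) := by
  have hy : (0:ℝ) < 1 - y := by linarith
  have h1 : x - x * y = x * (1 - y) := by ring
  have h2 : x * (1 - y) ≤ 1 - y := by nlinarith
  have h3 : (1 - y) = (1 - y) ^ ((1:ℝ)/2) * (1 - y) ^ ((1:ℝ)/2) := by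
    rw [← Real.rpow_add hy]; norm_num
  have h4 : (1 - y) ^ ((1:ℝ)/2) ≤ (1 - x) ^ ((1:ℝ)/2) :=
    Real.rpow_le_rpow hy.le (by linarith) (by norm_num)
  calc x - x * y = x * (1 - y) := h1
    _ ≤ 1 - y := h2
    _ = (1 - y) ^ ((1:ℝ)/2) * (1 - y) ^ ((1:ℝ)/2) := h3
    _ ≤ (1 - x) ^ ((1:ℝ)/2) * (1 - y) ^ ((1:ℝ)/2) :=
        mul_le_mul_of_nonneg_right h4 (Real.rpow_nonneg hy.le _)

/-- The key numerator bound: `0 ≤ min x y - xy ≤ √(1-x)·√(1-y)` on `[0,1)²`. -/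
lemma num_bound {x y : ℝ} (hx0 : 0 ≤ x) (hx1 : x < 1) (hy0 : 0 ≤ y) (hy1 : y < 1) :
    0 ≤ min x y - x * y ∧
      min x y - x * y ≤ (1 - x) ^ ((1:ℝ)/2) * (1 - y) ^ ((1:ℝ)/2) := by
  rcases le_total x y with h | h
  · rw [min_eq_left h]
    exact ⟨by nlinarith, aux_num_bound hx0 hx1 hy1 h⟩
  · rw [min_eq_right h]
    refine ⟨by nlinarith, ?_⟩
    have := aux_num_bound hy0 hy1 hx1 h
    calc y - x * y = y - y * x := by ring
      _ ≤ (1 - y) ^ ((1:ℝ)/2) * (1 - x) ^ ((1:ℝ)/2) := this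
      _ = (1 - x) ^ ((1:ℝ)/2) * (1 - y) ^ ((1:ℝ)/2) := by ring

/-- Pointwise bound for the kernel by a product of integrable power functions. -/
lemma kernel_ptwise_bound (ε : ℝ) {x y : ℝ}
    (hx0 : 0 ≤ x) (hx1 : x < 1) (hy0 : 0 ≤ y) (hy1 : y < 1) :
    |(min x y - x * y) / ((1 - x) ^ ((3:ℝ)/2 - ε) * (1 - y) ^ ((3:ℝ)/2 - ε))| ≤
      (1 - x) ^ (ε - 1) * (1 - y) ^ (ε - 1) := by
  have hx : (0:ℝ) < 1 - x := by linarith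
  have hy : (0:ℝ) < 1 - y := by linarith
  have hD : 0 < (1 - x) ^ ((3:ℝ)/2 - ε) * (1 - y) ^ ((3:ℝ)/2 - ε) :=
    mul_pos (Real.rpow_pos_of_pos hx _) (Real.rpow_pos_of_pos hy _)
  obtain ⟨h0, h1⟩ := num_bound hx0 hx1 hy0 hy1
  rw [abs_of_nonneg (div_nonneg h0 hD.le), div_le_iff₀ hD]
  have e1 : (1 - x) ^ (ε - 1) * (1 - x) ^ ((3:ℝ)/2 - ε) = (1 - x) ^ ((1:ℝ)/2) := by
    rw [← Real.rpow_add hx]; norm_num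
  have e2 : (1 - y) ^ (ε - 1) * (1 - y) ^ ((3:ℝ)/2 - ε) = (1 - y) ^ ((1:ℝ)/2) := by
    rw [← Real.rpow_add hy]; norm_num
  calc min x y - x * y ≤ (1 - x) ^ ((1:ℝ)/2) * (1 - y) ^ ((1:ℝ)/2) := h1
    _ = ((1 - x) ^ (ε - 1) * (1 - x) ^ ((3:ℝ)/2 - ε)) *
        ((1 - y) ^ (ε - 1) * (1 - y) ^ ((3:ℝ)/2 - ε)) := by rw [e1, e2]
    _ = (1 - x) ^ (ε - 1) * (1 - y) ^ (ε - 1) *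
        ((1 - x) ^ ((3:ℝ)/2 - ε) * (1 - y) ^ ((3:ℝ)/2 - ε)) := by ring

/-- 1D integrability of `(1-x)^{ε-1}` on `(a,1)`. -/
lemma oneD_integrable (ε a : ℝ) (hε : 0 < ε) (ha : a ≤ 1) :
    IntegrableOn (fun x : ℝ => (1 - x) ^ (ε - 1)) (Set.Ioo a 1) volume := by
  have h := (intervalIntegral.intervalIntegrable_rpow'
    (show (-1:ℝ) < ε - 1 by linarith) (a := 0) (b := 1 - a)).comp_sub_left 1
  simp only [sub_sub_cancel, sub_zero] at h
  rw [intervalIntegrable_iff, Set.uIoc_comm, Set.uIoc_of_le ha] at h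
  exact h.mono_set Set.Ioo_subset_Ioc_self

/-- Value of the 1D integral. -/
lemma oneD_integral (ε β : ℝ) (hε : 0 < ε) (hβ : β ≤ 1) :
    ∫ x in Set.Ioo β 1, (1 - x) ^ (ε - 1) = (1 - β) ^ ε / ε := by
  rw [← integral_Ioc_eq_integral_Ioo, ← intervalIntegral.integral_of_le hβ]
  have h := intervalIntegral.integral_comp_sub_left (a := β) (b := 1)
    (fun x : ℝ => x ^ (ε - 1)) 1
  rw [h, sub_self]
  rw [integral_rpow (Or.inl (by linarith : (-1:ℝ) < ε - 1))]
  have hε' : ε - 1 + 1 = ε := by ring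
  rw [hε', Real.zero_rpow hε.ne']
  ring

/-- Product integrability of the bounding function. -/
lemma prod_bound_integrable (ε a : ℝ) (hε : 0 < ε) (ha : a ≤ 1) :
    IntegrableOn (fun p : ℝ × ℝ => (1 - p.1) ^ (ε - 1) * (1 - p.2) ^ (ε - 1))
      (Set.Ioo a 1 ×ˢ Set.Ioo a 1) volume := by
  have h := (oneD_integrable ε a hε ha).mul_prod (oneD_integrable ε a hε ha)
  rwa [Measure.prod_restrict, ← Measure.volume_eq_prod] at h

/-- The function `g(x,y) = (min(x,y) - xy)/((1-x)^{3/2-ε}(1-y)^{3/2-ε})` with `ε > 0`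
is integrable on `(α,1)×(α,1)` for any `α ∈ (0,1)`, and the tail contribution over
`(β,1)×(β,1)` is of order `(1-β)^{2ε}` as `β → 1⁻`. -/
theorem variance_kernel_integrable (ε : ℝ) (hε : 0 < ε)
    (α : ℝ) (hα : α ∈ Set.Ioo (0:ℝ) 1) :
    IntegrableOn (fun p : ℝ × ℝ =>
        (min p.1 p.2 - p.1 * p.2) /
          ((1 - p.1) ^ ((3:ℝ) / 2 - ε) * (1 - p.2) ^ ((3:ℝ) / 2 - ε)))
      (Set.Ioo α 1 ×ˢ Set.Ioo α 1) volume ∧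
    (fun β : ℝ => ∫ p in Set.Ioo β 1 ×ˢ Set.Ioo β 1,
        (min p.1 p.2 - p.1 * p.2) /
          ((1 - p.1) ^ ((3:ℝ) / 2 - ε) * (1 - p.2) ^ ((3:ℝ) / 2 - ε)))
      =O[nhdsWithin 1 (Set.Iio 1)] fun β : ℝ => (1 - β) ^ (2 * ε) := by
  set f : ℝ × ℝ → ℝ := fun p =>
    (min p.1 p.2 - p.1 * p.2) /
      ((1 - p.1) ^ ((3:ℝ) / 2 - ε) * (1 - p.2) ^ ((3:ℝ) / 2 - ε)) with hf_def
  set B : ℝ × ℝ → ℝ := fun p => (1 - p.1) ^ (ε - 1) * (1 - p.2) ^ (ε - 1) with hB_def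
  have hmeas : Measurable f := by fun_prop
  -- integrability on (α,1)²
  have key : ∀ a : ℝ, 0 < a → a ≤ 1 →
      IntegrableOn f (Set.Ioo a 1 ×ˢ Set.Ioo a 1) volume := by
    intro a ha0 ha1
    apply Integrable.mono' (prod_bound_integrable ε a hε ha1)
      hmeas.aestronglyMeasurable
    apply ae_restrict_of_forall_mem (measurableSet_Ioo.prod measurableSet_Ioo)
    rintro ⟨x, y⟩ ⟨hx, hy⟩
    rw [Real.norm_eq_abs]
    exact kernel_ptwise_bound ε (le_of_lt (lt_trans ha0 hx.1)) hx.2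
      (le_of_lt (lt_trans ha0 hy.1)) hy.2
  refine ⟨key α hα.1 hα.2.le, ?_⟩
  rw [isBigO_iff]
  refine ⟨(ε ^ 2)⁻¹, ?_⟩
  have hmem : Set.Ioo α 1 ∈ nhdsWithin (1:ℝ) (Set.Iio 1) := by
    rw [← Set.Iio_inter_Ioi]
    exact inter_mem_nhdsWithin _ (Ioi_mem_nhds hα.2)
  filter_upwards [hmem] with β hβ
  have hβ0 : 0 < β := lt_trans hα.1 hβ.1
  have hβ1 : β < 1 := hβ.2
  have hb : (0:ℝ) < 1 - β := by linarith
  have hfβ : IntegrableOn f (Set.Ioo β 1 ×ˢ Set.Ioo β 1) volume := key β hβ0 hβ1.le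
  have hBβ : IntegrableOn B (Set.Ioo β 1 ×ˢ Set.Ioo β 1) volume :=
    prod_bound_integrable ε β hε hβ1.le
  have step1 : ‖∫ p in Set.Ioo β 1 ×ˢ Set.Ioo β 1, f p‖ ≤
      ∫ p in Set.Ioo β 1 ×ˢ Set.Ioo β 1, ‖f p‖ :=
    norm_integral_le_integral_norm f
  have step2 : ∫ p in Set.Ioo β 1 ×ˢ Set.Ioo β 1, ‖f p‖ ≤
      ∫ p in Set.Ioo β 1 ×ˢ Set.Ioo β 1, B p := by
    apply setIntegral_mono_on hfβ.norm hBβ (measurableSet_Ioo.prod measurableSet_Ioo)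
    rintro ⟨x, y⟩ ⟨hx, hy⟩
    rw [Real.norm_eq_abs]
    exact kernel_ptwise_bound ε (le_of_lt (lt_trans hβ0 hx.1)) hx.2
      (le_of_lt (lt_trans hβ0 hy.1)) hy.2
  have step3 : ∫ p in Set.Ioo β 1 ×ˢ Set.Ioo β 1, B p = (1 - β) ^ (2 * ε) / ε ^ 2 := by
    have h1 : ∫ p in Set.Ioo β 1 ×ˢ Set.Ioo β 1, B p =
        (∫ x in Set.Ioo β 1, (1 - x) ^ (ε - 1)) *
          ∫ x in Set.Ioo β 1, (1 - x) ^ (ε - 1) := by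
      rw [hB_def, Measure.volume_eq_prod, ← Measure.prod_restrict]
      exact integral_prod_mul (fun x : ℝ => (1 - x) ^ (ε - 1))
        (fun x : ℝ => (1 - x) ^ (ε - 1))
    rw [h1, oneD_integral ε β hε hβ1.le]
    rw [div_mul_div_comm, ← Real.rpow_add hb]
    ring_nf
  have step4 : ‖(1 - β) ^ (2 * ε)‖ = (1 - β) ^ (2 * ε) :=
    Real.norm_of_nonneg (Real.rpow_nonneg hb.le _)
  rw [step4]
  calc ‖∫ p in Set.Ioo β 1 ×ˢ Set.Ioo β 1, f p‖
      ≤ ∫ p in Set.Ioo β 1 ×ˢ Set.Ioo β 1, B p := le_trans step1 step2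
    _ = (1 - β) ^ (2 * ε) / ε ^ 2 := step3
    _ = (ε ^ 2)⁻¹ * (1 - β) ^ (2 * ε) := by ring
end
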